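/- Let K̃ ⊇ K be an extension of real differential fields (the derivation of K̃ extending that of K) such that the field of constants of K̃ equals the field of constants k of K, and let A ∈ Mat_n(K). If the equation y′ = Ay has a real Picard–Vessiot field over K̃, then y′ = Ay has a real Picard–Vessiot field over K. -/

import Mathlib

/-- A derivation on a field `F`. -/
structure FieldDeriv (F : Type) [Field F] : Type where
  d : F → F
  map_add : ∀ a b : F, d (a + b) = d a + d b
  leibniz : ∀ a b : F, d (a * b) = a * d b + d a * b

/-- A field is (formally) real if `-1` is not a sum of squares. -/
def IsFormallyRealField (F : Type) [Field F] : Prop :=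
  ¬ IsSumSq (-1 : F)

/-- `L/K`, with derivations `dL` extending `dK`, is a Picard--Vessiot field for `y' = A y`. -/
def IsPicardVessiot {K L : Type} [Field K] [Field L] [Algebra K L]
    (dK : FieldDeriv K) (dL : FieldDeriv L) {n : ℕ}
    (A : Matrix (Fin n) (Fin n) K) : Prop :=
  (∀ a : K, dL.d (algebraMap K L a) = algebraMap K L (dK.d a)) ∧
  ∃ F : Matrix (Fin n) (Fin n) L, IsUnit F.det ∧
    (∀ i j, dL.d (F i j) = (A.map (algebraMap K L) * F) i j) ∧
    IntermediateField.adjoin K (Set.range fun q : Fin n × Fin n => F q.1 q.2) = ⊤ ∧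
    ∀ x : L, dL.d x = 0 → ∃ a : K, dK.d a = 0 ∧ algebraMap K L a = x

/-!
Take a real Picard–Vessiot field `L` over `K̃` with fundamental matrix `F`, and let `M ⊆ L`
be the field generated over `K` by the entries of `F`. Since `F' = AF` with `A` over `K`, the
derivation of `L` maps `M` into itself. A constant of `M` is a constant of `L`, hence lies in
`K̃`, hence in `K`; so `M` is a Picard–Vessiot field over `K`, and it is real as a subfield of
the real field `L`.
-/

theorem IsSumSq.map {R S : Type*} [NonAssocSemiring R] [NonAssocSemiring S] (f : R →+* S)
    {a : R} (h : IsSumSq a) : IsSumSq (f a) := by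
  induction h with
  | zero => simp
  | sq_add b _ ih => simpa using IsSumSq.sq_add (f b) ih

theorem IsFormallyRealField.of_ringHom {F L : Type} [Field F] [Field L] (f : F →+* L)
    (hL : IsFormallyRealField L) : IsFormallyRealField F :=
  fun h => hL (by simpa using h.map f)

namespace FieldDeriv

variable {F : Type} [Field F] (D : FieldDeriv F)

theorem map_zero : D.d 0 = 0 := by
  simpa using D.map_add 0 0

theorem map_one : D.d 1 = 0 := by
  simpa using D.leibniz 1 1

theorem map_inv (x : F) : D.d x⁻¹ = -(D.d x * x⁻¹ * x⁻¹) := by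
  rcases eq_or_ne x 0 with rfl | hx
  · simp [D.map_zero]
  have h := D.leibniz x x⁻¹
  rw [mul_inv_cancel₀ hx, D.map_one] at h
  have hx' : x⁻¹ * x = 1 := inv_mul_cancel₀ hx
  linear_combination -x⁻¹ * h - D.d x⁻¹ * hx'

variable {K : Type} [Field K] [Algebra K F]

def derivClosedPart (M : IntermediateField K F) (hK : ∀ a : K, D.d (algebraMap K F a) ∈ M) :
    IntermediateField K F where
  carrier := {x | x ∈ M ∧ D.d x ∈ M}
  mul_mem' ha hb := ⟨mul_mem ha.1 hb.1, by
    rw [D.leibniz]; exact add_mem (mul_mem ha.1 hb.2) (mul_mem ha.2 hb.1)⟩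
  add_mem' ha hb := ⟨add_mem ha.1 hb.1, by rw [D.map_add]; exact add_mem ha.2 hb.2⟩
  algebraMap_mem' a := ⟨M.algebraMap_mem a, hK a⟩
  inv_mem' x hx := ⟨inv_mem hx.1, by
    rw [D.map_inv]; exact neg_mem (mul_mem (mul_mem hx.2 (inv_mem hx.1)) (inv_mem hx.1))⟩

open IntermediateField in
theorem deriv_mem_adjoin {dK : FieldDeriv K}
    (hK : ∀ a, D.d (algebraMap K F a) = algebraMap K F (dK.d a)) {S : Set F}
    (hS : ∀ s ∈ S, D.d s ∈ adjoin K S) {x : F} (hx : x ∈ adjoin K S) : D.d x ∈ adjoin K S := by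
  have hle : adjoin K S ≤ D.derivClosedPart _ fun a => hK a ▸ _root_.algebraMap_mem _ _ :=
    adjoin_le_iff.mpr fun s hs => ⟨subset_adjoin K S hs, hS s hs⟩
  exact (hle hx).2

def restrict (M : IntermediateField K F) (hM : ∀ x ∈ M, D.d x ∈ M) : FieldDeriv M where
  d x := ⟨D.d x, hM x x.2⟩
  map_add a b := Subtype.ext (D.map_add a b)
  leibniz a b := Subtype.ext (D.leibniz a b)

end FieldDeriv

theorem IntermediateField.adjoin_range_restrict_eq_top {K L ι : Type} [Field K] [Field L]
    [Algebra K L] (f : ι → L) :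
    adjoin K (Set.range fun i =>
      (⟨f i, subset_adjoin K _ (Set.mem_range_self i)⟩ : adjoin K (Set.range f))) = ⊤ := by
  apply map_injective (adjoin K (Set.range f)).val
  rw [adjoin_map, ← AlgHom.fieldRange_eq_map, fieldRange_val, ← Set.range_comp]
  rfl

open IntermediateField in
theorem exists_intermediateField_isPicardVessiot {K L : Type} [Field K] [Field L] [Algebra K L]
    {dK : FieldDeriv K} {dL : FieldDeriv L}
    (hext : ∀ a, dL.d (algebraMap K L a) = algebraMap K L (dK.d a))
    {n : ℕ} {A : Matrix (Fin n) (Fin n) K} {F : Matrix (Fin n) (Fin n) L} (hdet : IsUnit F.det)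
    (hF : ∀ i j, dL.d (F i j) = (A.map (algebraMap K L) * F) i j)
    (hconst : ∀ x, dL.d x = 0 → ∃ a, dK.d a = 0 ∧ algebraMap K L a = x) :
    ∃ (M : IntermediateField K L) (dM : FieldDeriv M), IsPicardVessiot dK dM A := by
  set M := adjoin K (Set.range fun q : Fin n × Fin n => F q.1 q.2)
  have hFM (i j) : F i j ∈ M := subset_adjoin K _ ⟨(i, j), rfl⟩
  have hMd : ∀ x ∈ M, dL.d x ∈ M := fun x => dL.deriv_mem_adjoin hext <| by
    rintro _ ⟨⟨i, j⟩, rfl⟩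
    rw [hF, Matrix.mul_apply]
    exact sum_mem fun k _ => mul_mem (M.algebraMap_mem _) (hFM k j)
  let FM : Matrix (Fin n) (Fin n) M := fun i j => ⟨F i j, hFM i j⟩
  have hFM_map : M.val.toRingHom.mapMatrix FM = F := rfl
  refine ⟨M, dL.restrict M hMd, fun a => Subtype.ext (hext a), FM, ?_, ?_, ?_, ?_⟩
  · rw [← hFM_map, ← RingHom.map_det] at hdet
    exact (isUnit_map_iff _ _).mp hdet
  · intro i j
    refine Subtype.ext ((hF i j).trans ?_)
    push_cast [Matrix.mul_apply, Matrix.map_apply]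
    rfl
  · exact adjoin_range_restrict_eq_top fun q : Fin n × Fin n => F q.1 q.2
  · intro x hx
    obtain ⟨a, ha, hax⟩ := hconst x (congrArg Subtype.val hx)
    exact ⟨a, ha, Subtype.ext hax⟩

theorem real_picard_vessiot_descends_general
    (K Kt : Type) [Field K] [Field Kt] [Algebra K Kt]
    (dK : FieldDeriv K) (dKt : FieldDeriv Kt)
    (hext : ∀ a : K, dKt.d (algebraMap K Kt a) = algebraMap K Kt (dK.d a))
    -- the field of constants of `K̃` equals the field of constants `k` of `K`
    (hconst : ∀ x : Kt, dKt.d x = 0 → ∃ a : K, dK.d a = 0 ∧ algebraMap K Kt a = x)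
    (n : ℕ) (A : Matrix (Fin n) (Fin n) K)
    (hex : ∃ (L : Type) (_ : Field L) (_ : Algebra Kt L) (dL : FieldDeriv L),
      IsPicardVessiot dKt dL (A.map (algebraMap K Kt)) ∧ IsFormallyRealField L) :
    ∃ (L : Type) (_ : Field L) (_ : Algebra K L) (dL : FieldDeriv L),
      IsPicardVessiot dK dL A ∧ IsFormallyRealField L := by
  obtain ⟨L, _, _, dL, ⟨hextL, F, hdet, hF, -, hconstL⟩, hLreal⟩ := hex
  let : Algebra K L := ((algebraMap Kt L).comp (algebraMap K Kt)).toAlgebra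
  have : IsScalarTower K Kt L := IsScalarTower.of_algebraMap_eq fun _ => rfl
  have hextKL (a : K) : dL.d (algebraMap K L a) = algebraMap K L (dK.d a) := by
    rw [IsScalarTower.algebraMap_apply K Kt L, hextL, hext, ← IsScalarTower.algebraMap_apply]
  have hconstKL (x : L) (hx : dL.d x = 0) : ∃ a, dK.d a = 0 ∧ algebraMap K L a = x := by
    obtain ⟨b, hb, rfl⟩ := hconstL x hx
    obtain ⟨a, ha, rfl⟩ := hconst b hb
    exact ⟨a, ha, IsScalarTower.algebraMap_apply K Kt L a⟩
  rw [Matrix.map_map, ← RingHom.coe_comp, ← IsScalarTower.algebraMap_eq] at hF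
  obtain ⟨M, dM, hM⟩ := exists_intermediateField_isPicardVessiot hextKL hdet hF hconstKL
  exact ⟨M, inferInstance, inferInstance, dM, hM, hLreal.of_ringHom M.val.toRingHom⟩

/-- Let `K̃ ⊇ K` be an extension of real differential fields with the same
field of constants.  If `y' = A y` (with `A` over `K`) has a real Picard--Vessiot field
over `K̃`, then it has a real Picard--Vessiot field over `K`. -/
theorem real_picard_vessiot_descends
    (K Kt : Type) [Field K] [Field Kt] [CharZero K] [CharZero Kt] [Algebra K Kt]
    (dK : FieldDeriv K) (dKt : FieldDeriv Kt)
    (hext : ∀ a : K, dKt.d (algebraMap K Kt a) = algebraMap K Kt (dK.d a))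
    (hKreal : IsFormallyRealField K) (hKtreal : IsFormallyRealField Kt)
    -- the field of constants of `K̃` equals the field of constants `k` of `K`
    (hconst : ∀ x : Kt, dKt.d x = 0 → ∃ a : K, dK.d a = 0 ∧ algebraMap K Kt a = x)
    (n : ℕ) (A : Matrix (Fin n) (Fin n) K)
    (hex : ∃ (L : Type) (_ : Field L) (_ : Algebra Kt L) (dL : FieldDeriv L),
      IsPicardVessiot dKt dL (A.map (algebraMap K Kt)) ∧ IsFormallyRealField L) :
    ∃ (L : Type) (_ : Field L) (_ : Algebra K L) (dL : FieldDeriv L),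
      IsPicardVessiot dK dL A ∧ IsFormallyRealField L :=
  real_picard_vessiot_descends_general K Kt dK dKt hext hconst n A hex
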